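/- arXiv:1808.06231 — 4 statements merged into one kernel-verified Lean document; each statement's English description precedes it below -/
import Mathlib

section
/- Let K = {u ∈ ℝ^{K+1} : P̂u ≥ 0, R̂u ∈ SOC(K_r)} for matrices P̂ ∈ ℝ^{K_p×(K+1)} and R̂ ∈ ℝ^{K_r×(K+1)}. Suppose V ∈ S^{K+1} can be written as V = W + τŜ + P̂ᵀΣP̂ + (1/2)(P̂ᵀΦR̂ + R̂ᵀΦᵀP̂) where W is positive semidefinite, τ ≥ 0, Σ is an entrywise nonnegative symmetric matrix, and each row of Φ (as a vector in ℝ^{K_r}) belongs to SOC(K_r). Then uᵀVu ≥ 0 for all u ∈ K, i.e., V is copositive with respect to K. -/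
/-!
Each of the four summands of `V` gives a nonnegative quadratic form on the cone: `W` because it is
positive semidefinite, `Ŝ` because `uᵀŜu = (R̂u)_{K_r}² - Σ_{ℓ<K_r} (R̂u)_ℓ²` is the Lorentz form of
a vector of the second-order cone, `Σ` because `P̂u` and `Σ` are entrywise nonnegative, and the
`Φ`-term because its quadratic form is `Σ_i (P̂u)_i ⟨Φ_i, R̂u⟩`, where each inner product of two
vectors of the self-dual cone `SOC(K_r)` is nonnegative (Cauchy–Schwarz).
-/

open Matrix Finset

section SecondOrderCone

variable {ι : Type*} [Fintype ι] [DecidableEq ι] {i₀ : ι} {x y : ι → ℝ}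

def IsInSOC (i₀ : ι) (x : ι → ℝ) : Prop :=
  √(∑ ℓ ∈ univ \ {i₀}, x ℓ ^ 2) ≤ x i₀

theorem IsInSOC.apex_nonneg (hx : IsInSOC i₀ x) : 0 ≤ x i₀ :=
  (Real.sqrt_nonneg _).trans hx

theorem IsInSOC.sum_sq_le (hx : IsInSOC i₀ x) : ∑ ℓ ∈ univ \ {i₀}, x ℓ ^ 2 ≤ x i₀ ^ 2 :=
  (Real.sqrt_le_iff.mp hx).2

theorem dotProduct_eq_sum_sdiff_add_apex (i₀ : ι) (x y : ι → ℝ) :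
    x ⬝ᵥ y = ∑ ℓ ∈ univ \ {i₀}, x ℓ * y ℓ + x i₀ * y i₀ :=
  sum_eq_sum_sdiff_singleton_add (mem_univ i₀) _

theorem IsInSOC.dotProduct_nonneg (hx : IsInSOC i₀ x) (hy : IsInSOC i₀ y) : 0 ≤ x ⬝ᵥ y := by
  have hcs : ∑ ℓ ∈ univ \ {i₀}, -x ℓ * y ℓ ≤ x i₀ * y i₀ :=
    calc ∑ ℓ ∈ univ \ {i₀}, -x ℓ * y ℓ
        ≤ √(∑ ℓ ∈ univ \ {i₀}, (-x ℓ) ^ 2) * √(∑ ℓ ∈ univ \ {i₀}, y ℓ ^ 2) :=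
          Real.sum_mul_le_sqrt_mul_sqrt _ _ _
      _ ≤ x i₀ * y i₀ := by
          simp only [neg_sq]
          exact mul_le_mul hx hy (Real.sqrt_nonneg _) hx.apex_nonneg
  simp only [neg_mul, sum_neg_distrib, neg_le] at hcs
  rw [dotProduct_eq_sum_sdiff_add_apex i₀]
  linarith

theorem IsInSOC.lorentz_form_nonneg (hx : IsInSOC i₀ x) :
    0 ≤ x ⬝ᵥ diagonal (fun ℓ => if ℓ = i₀ then (1 : ℝ) else -1) *ᵥ x := by
  have hoff : ∑ ℓ ∈ univ \ {i₀}, x ℓ * (diagonal (fun ℓ => if ℓ = i₀ then (1 : ℝ) else -1) *ᵥ x) ℓ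
      = -∑ ℓ ∈ univ \ {i₀}, x ℓ ^ 2 := by
    rw [← sum_neg_distrib]
    refine sum_congr rfl fun ℓ hℓ => ?_
    rw [mulVec_diagonal, if_neg (by simpa using hℓ)]
    ring
  rw [dotProduct_eq_sum_sdiff_add_apex i₀, hoff, mulVec_diagonal, if_pos rfl]
  linarith [hx.sum_sq_le]

end SecondOrderCone

theorem dotProduct_transpose_mul_mul_mulVec {R l m n : Type*} [CommSemiring R]
    [Fintype l] [Fintype m] [Fintype n]
    (A : Matrix l n R) (B : Matrix l m R) (C : Matrix m n R) (u : n → R) :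
    u ⬝ᵥ (Aᵀ * B * C) *ᵥ u = (A *ᵥ u) ⬝ᵥ B *ᵥ (C *ᵥ u) := by
  rw [Matrix.mul_assoc, ← mulVec_mulVec, dotProduct_transpose_mulVec, dotProduct_comm, mulVec_mulVec]

theorem dotProduct_mulVec_nonneg_of_nonneg {R n : Type*} [CommSemiring R] [PartialOrder R]
    [IsOrderedRing R] [Fintype n] {S : Matrix n n R} {p : n → R}
    (hS : ∀ i j, 0 ≤ S i j) (hp : ∀ i, 0 ≤ p i) : 0 ≤ p ⬝ᵥ S *ᵥ p :=
  sum_nonneg fun i _ => mul_nonneg (hp i) (sum_nonneg fun j _ => mul_nonneg (hS i j) (hp j))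

theorem stmt2_general (K Kp Kr : ℕ)
    (P : Matrix (Fin Kp) (Fin (K + 1)) ℝ) (R : Matrix (Fin (Kr + 1)) (Fin (K + 1)) ℝ)
    (V W : Matrix (Fin (K + 1)) (Fin (K + 1)) ℝ) (Sg : Matrix (Fin Kp) (Fin Kp) ℝ) (τ : ℝ)
    (Φ : Matrix (Fin Kp) (Fin (Kr + 1)) ℝ)
    (hW : W.PosSemidef) (hτ : 0 ≤ τ)
    (hSgNonneg : ∀ i j, 0 ≤ Sg i j)
    (hΦ : ∀ i, Real.sqrt (∑ ℓ ∈ Finset.univ \ {Fin.last Kr}, (Φ i ℓ) ^ 2) ≤ Φ i (Fin.last Kr))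
    (hV : V = W + τ • (Rᵀ * Matrix.diagonal (fun ℓ => if ℓ = Fin.last Kr then (1 : ℝ) else -1) * R)
        + Pᵀ * Sg * P + (1 / 2 : ℝ) • (Pᵀ * Φ * R + Rᵀ * Φᵀ * P)) :
    ∀ u : Fin (K + 1) → ℝ, (∀ i, 0 ≤ P.mulVec u i) →
      Real.sqrt (∑ ℓ ∈ Finset.univ \ {Fin.last Kr}, (R.mulVec u ℓ) ^ 2)
        ≤ R.mulVec u (Fin.last Kr) →
      0 ≤ u ⬝ᵥ V.mulVec u := by
  intro u hPu hRu
  set D := diagonal (fun ℓ => if ℓ = Fin.last Kr then (1 : ℝ) else -1)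
  have hexpand : u ⬝ᵥ V *ᵥ u = u ⬝ᵥ W *ᵥ u + τ * ((R *ᵥ u) ⬝ᵥ D *ᵥ (R *ᵥ u))
      + (P *ᵥ u) ⬝ᵥ Sg *ᵥ (P *ᵥ u) + (P *ᵥ u) ⬝ᵥ Φ *ᵥ (R *ᵥ u) := by
    have hsymm : u ⬝ᵥ (Rᵀ * Φᵀ * P) *ᵥ u = (P *ᵥ u) ⬝ᵥ Φ *ᵥ (R *ᵥ u) := by
      rw [dotProduct_transpose_mul_mul_mulVec, dotProduct_transpose_mulVec]
    simp only [hV, add_mulVec, smul_mulVec, dotProduct_add, dotProduct_smul, smul_eq_mul,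
      hsymm, dotProduct_transpose_mul_mul_mulVec]
    ring
  have hWu : 0 ≤ u ⬝ᵥ W *ᵥ u := by simpa using hW.dotProduct_mulVec_nonneg u
  have hDu : 0 ≤ (R *ᵥ u) ⬝ᵥ D *ᵥ (R *ᵥ u) := IsInSOC.lorentz_form_nonneg hRu
  have hSgu : 0 ≤ (P *ᵥ u) ⬝ᵥ Sg *ᵥ (P *ᵥ u) := dotProduct_mulVec_nonneg_of_nonneg hSgNonneg hPu
  have hΦu : 0 ≤ (P *ᵥ u) ⬝ᵥ Φ *ᵥ (R *ᵥ u) :=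
    sum_nonneg fun i _ => mul_nonneg (hPu i) (IsInSOC.dotProduct_nonneg (hΦ i) hRu)
  rw [hexpand]
  positivity

/-- Membership in the inner approximation `IA(K)` implies copositivity with respect to
`K = {u : P̂u ≥ 0, R̂u ∈ SOC}`. -/
theorem stmt2 (K Kp Kr : ℕ)
    (P : Matrix (Fin Kp) (Fin (K + 1)) ℝ) (R : Matrix (Fin (Kr + 1)) (Fin (K + 1)) ℝ)
    (V W : Matrix (Fin (K + 1)) (Fin (K + 1)) ℝ) (Sg : Matrix (Fin Kp) (Fin Kp) ℝ) (τ : ℝ)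
    (Φ : Matrix (Fin Kp) (Fin (Kr + 1)) ℝ)
    (hW : W.PosSemidef) (hτ : 0 ≤ τ)
    (hSgSymm : Sg.IsSymm)
    (hSgNonneg : ∀ i j, 0 ≤ Sg i j)
    (hΦ : ∀ i, Real.sqrt (∑ ℓ ∈ Finset.univ \ {Fin.last Kr}, (Φ i ℓ) ^ 2) ≤ Φ i (Fin.last Kr))
    (hV : V = W + τ • (Rᵀ * Matrix.diagonal (fun ℓ => if ℓ = Fin.last Kr then (1 : ℝ) else -1) * R)
        + Pᵀ * Sg * P + (1 / 2 : ℝ) • (Pᵀ * Φ * R + Rᵀ * Φᵀ * P)) :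
    ∀ u : Fin (K + 1) → ℝ, (∀ i, 0 ≤ P.mulVec u i) →
      Real.sqrt (∑ ℓ ∈ Finset.univ \ {Fin.last Kr}, (R.mulVec u ℓ) ^ 2)
        ≤ R.mulVec u (Fin.last Kr) →
      0 ≤ u ⬝ᵥ V.mulVec u :=
  stmt2_general K Kp Kr P R V W Sg τ Φ hW hτ hSgNonneg hΦ hV
end

section
/- Let c ∈ ℕ^K with all entries positive and U = {u ∈ [−1,1]^K : cᵀu = 0}. Then max_{u∈U} ‖u‖₁ = K if and only if the multiset {c₁,…,c_K} admits a partition into two subsets of equal sum. -/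
/-- For positive integer weights `c`, the maximum of the 1-norm over
`U = {u ∈ [-1,1]^K : cᵀu = 0}` equals `K` iff the multiset `{c₁,…,c_K}` can be
partitioned into two subsets of equal sum. -/
theorem stmt9 (K : ℕ) (c : Fin K → ℕ) (hc : ∀ k, 0 < c k)
    (U : Set (Fin K → ℝ))
    (hU : U = {u | (∀ k, -1 ≤ u k ∧ u k ≤ 1) ∧ ∑ k, (c k : ℝ) * u k = 0}) :
    IsGreatest ((fun u : Fin K → ℝ => ∑ k, |u k|) '' U) (K : ℝ) ↔
      ∃ S : Finset (Fin K), ∑ k ∈ S, c k = ∑ k ∈ Sᶜ, c k := by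
  classical
  subst hU
  constructor
  · rintro ⟨⟨u, ⟨hbd, hsum⟩, hK⟩, -⟩
    have hle : ∀ k ∈ Finset.univ, |u k| ≤ (1 : ℝ) :=
      fun k _ => abs_le.2 ⟨(hbd k).1, (hbd k).2⟩
    have hsum1 : ∑ k : Fin K, |u k| = ∑ k : Fin K, (1 : ℝ) := by
      simpa using hK
    have habs : ∀ k ∈ Finset.univ, |u k| = (1 : ℝ) :=
      (Finset.sum_eq_sum_iff_of_le hle).1 hsum1
    set S : Finset (Fin K) := Finset.univ.filter (fun k => u k = 1) with hS
    have huS : ∀ k ∈ S, u k = 1 := fun k hk => (Finset.mem_filter.1 hk).2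
    have huSc : ∀ k ∈ Sᶜ, u k = -1 := by
      intro k hk
      have h1 : u k ≠ 1 := by
        intro h
        exact (Finset.mem_compl.1 hk) (Finset.mem_filter.2 ⟨Finset.mem_univ k, h⟩)
      rcases (abs_eq (by norm_num : (0:ℝ) ≤ 1)).1 (habs k (Finset.mem_univ k)) with h | h
      · exact absurd h h1
      · exact h
    refine ⟨S, ?_⟩
    have hsplit : ∑ k ∈ S, (c k : ℝ) * u k + ∑ k ∈ Sᶜ, (c k : ℝ) * u k = 0 := by
      rw [Finset.sum_add_sum_compl]; exact hsum
    have h1 : ∑ k ∈ S, (c k : ℝ) * u k = ∑ k ∈ S, (c k : ℝ) :=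
      Finset.sum_congr rfl (fun k hk => by rw [huS k hk, mul_one])
    have h2 : ∑ k ∈ Sᶜ, (c k : ℝ) * u k = -∑ k ∈ Sᶜ, (c k : ℝ) := by
      rw [← Finset.sum_neg_distrib]
      exact Finset.sum_congr rfl (fun k hk => by rw [huSc k hk]; ring)
    have : (∑ k ∈ S, (c k : ℝ)) = ∑ k ∈ Sᶜ, (c k : ℝ) := by
      rw [h1, h2] at hsplit; linarith
    exact_mod_cast this
  · rintro ⟨S, hS⟩
    set u : Fin K → ℝ := fun k => if k ∈ S then 1 else -1 with hu
    have habs : ∀ k, |u k| = 1 := by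
      intro k; by_cases h : k ∈ S <;> simp [hu, h]
    constructor
    · refine ⟨u, ⟨fun k => ?_, ?_⟩, ?_⟩
      · by_cases h : k ∈ S <;> simp [hu, h]
      · have : ∑ k ∈ S, (c k : ℝ) * u k + ∑ k ∈ Sᶜ, (c k : ℝ) * u k
            = ∑ k, (c k : ℝ) * u k := Finset.sum_add_sum_compl S _
        rw [← this]
        have h1 : ∑ k ∈ S, (c k : ℝ) * u k = ∑ k ∈ S, (c k : ℝ) :=
          Finset.sum_congr rfl (fun k hk => by simp [hu, hk])
        have h2 : ∑ k ∈ Sᶜ, (c k : ℝ) * u k = -∑ k ∈ Sᶜ, (c k : ℝ) := by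
          rw [← Finset.sum_neg_distrib]
          refine Finset.sum_congr rfl (fun k hk => ?_)
          have : k ∉ S := Finset.mem_compl.1 hk
          simp [hu, this]
        have hScast : (∑ k ∈ S, (c k : ℝ)) = ∑ k ∈ Sᶜ, (c k : ℝ) := by
          exact_mod_cast congrArg (Nat.cast : ℕ → ℝ) hS
        rw [h1, h2, hScast]; ring
      · simp [habs]
    · rintro x ⟨v, ⟨hbd, -⟩, rfl⟩
      calc ∑ k, |v k| ≤ ∑ k : Fin K, (1 : ℝ) :=
            Finset.sum_le_sum (fun k _ => abs_le.2 ⟨(hbd k).1, (hbd k).2⟩)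
        _ = K := by simp
end

section
/- Let F_ℓ satisfy Assumption: K is a closed convex cone with U0 = {u ∈ K : u_{K+1} = 1} nonempty and compact. Suppose also that for each i ∈ [I], min_{u ∈ U0} uᵀĈᵢu = 0 with Ĉᵢ symmetric. Then the dual copositive feasibility problem {(λ, α) : λ e_{K+1}e_{K+1}ᵀ + Σᵢ αᵢĈᵢ − Ĉ₀ ∈ COP(K)} admits a Slater point: there exist λ* ∈ ℝ and α = 0 such that uᵀ(λ* e_{K+1}e_{K+1}ᵀ − Ĉ₀)u > 0 for all nonzero u ∈ K. -/
/-! Because the slice `U₀` is nonempty and bounded, the cone meets the hyperplane `u_{K+1} = 0`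
only at the origin; hence every `u ∈ K` is `u_{K+1} • v` for some `v ∈ U₀`, and the quadratic
form of `λ e eᵀ - Ĉ₀` at `u` is `u_{K+1}² (λ - vᵀĈ₀v)`. Any `λ` above the maximum of `vᵀĈ₀v` on
the compact `U₀` therefore works. -/

open Matrix

theorem add_mem_of_convex_of_smul_mem {E : Type*} [AddCommGroup E] [Module ℝ E] {C : Set E}
    (hconv : Convex ℝ C) (hcone : ∀ u ∈ C, ∀ t : ℝ, 0 ≤ t → t • u ∈ C) {x y : E} (hx : x ∈ C) (hy : y ∈ C) :
    x + y ∈ C := by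
  have hmid : (2⁻¹ : ℝ) • x + (2⁻¹ : ℝ) • y ∈ C :=
    hconv hx hy (by norm_num) (by norm_num) (by norm_num)
  simpa [smul_add, smul_smul] using hcone _ hmid 2 zero_le_two

section Cone

variable {E : Type*} [NormedAddCommGroup E] [NormedSpace ℝ E] {C : Set E} (ℓ : E →ₗ[ℝ] ℝ)
  (hconv : Convex ℝ C) (hcone : ∀ u ∈ C, ∀ t : ℝ, 0 ≤ t → t • u ∈ C)
  (hne : {u ∈ C | ℓ u = 1}.Nonempty) (hbdd : Bornology.IsBounded {u ∈ C | ℓ u = 1})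
include hconv hcone hne hbdd

/-- Otherwise the slice would contain the whole ray `v₀ + t • u`, `t ≥ 0`. -/
theorem eq_zero_of_mem_of_apply_eq_zero {u : E} (hu : u ∈ C) (hℓu : ℓ u = 0) : u = 0 := by
  obtain ⟨v₀, hv₀⟩ := hne
  obtain ⟨R, hR⟩ := hbdd.exists_norm_le
  have hray : ∀ t : ℝ, 0 ≤ t → t * ‖u‖ ≤ 2 * R := fun t ht => by
    have hmem : v₀ + t • u ∈ {u ∈ C | ℓ u = 1} :=
      ⟨add_mem_of_convex_of_smul_mem hconv hcone hv₀.1 (hcone u hu t ht), by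
        simp [hv₀.2, hℓu]⟩
    calc t * ‖u‖ = ‖(v₀ + t • u) - v₀‖ := by simp [norm_smul, abs_of_nonneg ht]
      _ ≤ ‖v₀ + t • u‖ + ‖v₀‖ := norm_sub_le _ _
      _ ≤ 2 * R := by linarith [hR _ hmem, hR _ hv₀]
  by_contra hu0
  have hpos : 0 < ‖u‖ := norm_pos_iff.mpr hu0
  have := hray ((2 * R + 1) / ‖u‖) (div_nonneg (by linarith [hray 0 le_rfl]) hpos.le)
  rw [div_mul_cancel₀ _ hpos.ne'] at this
  linarith

theorem exists_mem_slice_eq_smul {u : E} (hu : u ∈ C) :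
    ∃ v ∈ {u ∈ C | ℓ u = 1}, u = ℓ u • v := by
  rcases lt_or_ge 0 (ℓ u) with hpos | hnonpos
  · refine ⟨(ℓ u)⁻¹ • u, ⟨hcone u hu _ (inv_nonneg.mpr hpos.le), ?_⟩, ?_⟩
    · simp [hpos.ne']
    · simp [smul_smul, hpos.ne']
  · obtain ⟨v₀, hv₀⟩ := hne
    have hw : u + (-ℓ u) • v₀ = 0 :=
      eq_zero_of_mem_of_apply_eq_zero ℓ hconv hcone ⟨v₀, hv₀⟩ hbdd
        (add_mem_of_convex_of_smul_mem hconv hcone hu (hcone v₀ hv₀.1 _ (neg_nonneg.mpr hnonpos)))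
        (by simp [hv₀.2])
    refine ⟨v₀, hv₀, ?_⟩
    rwa [neg_smul, add_neg_eq_zero] at hw

end Cone

theorem dotProduct_mulVec_smul_smul {n R : Type*} [Fintype n] [CommRing R] (A : Matrix n n R)
    (c : R) (v : n → R) : (c • v) ⬝ᵥ A *ᵥ (c • v) = c ^ 2 * (v ⬝ᵥ A *ᵥ v) := by
  rw [mulVec_smul, dotProduct_smul, smul_dotProduct, smul_eq_mul, smul_eq_mul]
  ring

theorem dotProduct_vecMulVec_single_mulVec {n R : Type*} [Fintype n] [DecidableEq n]
    [CommSemiring R] (i : n) (v : n → R) : v ⬝ᵥ vecMulVec (Pi.single i 1) (Pi.single i 1) *ᵥ v = v i ^ 2 := by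
  simp [mulVec, vecMulVec_apply, dotProduct, Pi.single_apply, sq]

theorem stmt10_general (K : ℕ) (C : Set (Fin (K + 1) → ℝ))
    (hconv : Convex ℝ C)
    (hcone : ∀ u ∈ C, ∀ t : ℝ, 0 ≤ t → t • u ∈ C)
    (hne : ({u ∈ C | u (Fin.last K) = 1} : Set (Fin (K + 1) → ℝ)).Nonempty)
    (hcompact : IsCompact ({u ∈ C | u (Fin.last K) = 1} : Set (Fin (K + 1) → ℝ)))
    (C0 : Matrix (Fin (K + 1)) (Fin (K + 1)) ℝ) :
    ∃ lam : ℝ, ∀ u ∈ C, u ≠ 0 →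
      0 < u ⬝ᵥ ((lam • Matrix.vecMulVec (Pi.single (Fin.last K) 1) (Pi.single (Fin.last K) 1)
        - C0).mulVec u) := by
  obtain ⟨M, hM⟩ := hcompact.bddAbove_image (f := fun v => v ⬝ᵥ C0 *ᵥ v) (by fun_prop)
  refine ⟨M + 1, fun u hu hu0 => ?_⟩
  obtain ⟨v, hv, huv⟩ := exists_mem_slice_eq_smul (LinearMap.proj (Fin.last K)) hconv hcone
    hne hcompact.isBounded hu
  have hc : u (Fin.last K) ≠ 0 := fun h => hu0 (by simpa [h] using huv)
  rw [huv, dotProduct_mulVec_smul_smul]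
  refine mul_pos (sq_pos_of_ne_zero hc) ?_
  rw [sub_mulVec, dotProduct_sub, smul_mulVec, dotProduct_smul,
    dotProduct_vecMulVec_single_mulVec]
  have hv₁ : v (Fin.last K) = 1 := hv.2
  rw [hv₁, one_pow, smul_eq_mul, mul_one]
  linarith [hM ⟨v, hv, rfl⟩]

/-- Existence of a Slater point for the dual copositive program: with `α = 0`, there is
`λ*` such that `uᵀ(λ* e_{K+1}e_{K+1}ᵀ - Ĉ₀)u > 0` for all nonzero `u ∈ C`. -/
theorem stmt10 (K I : ℕ) (C : Set (Fin (K + 1) → ℝ))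
    (hclosed : IsClosed C) (hconv : Convex ℝ C)
    (hcone : ∀ u ∈ C, ∀ t : ℝ, 0 ≤ t → t • u ∈ C)
    (hne : ({u ∈ C | u (Fin.last K) = 1} : Set (Fin (K + 1) → ℝ)).Nonempty)
    (hcompact : IsCompact ({u ∈ C | u (Fin.last K) = 1} : Set (Fin (K + 1) → ℝ)))
    (C0 : Matrix (Fin (K + 1)) (Fin (K + 1)) ℝ) (hC0 : C0.IsSymm)
    (Chat : Fin I → Matrix (Fin (K + 1)) (Fin (K + 1)) ℝ)
    (hChatSymm : ∀ i, (Chat i).IsSymm)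
    (hChatMin : ∀ i, IsLeast
      ((fun u => u ⬝ᵥ (Chat i).mulVec u) '' {u ∈ C | u (Fin.last K) = 1}) 0) :
    ∃ lam : ℝ, ∀ u ∈ C, u ≠ 0 →
      0 < u ⬝ᵥ ((lam • Matrix.vecMulVec (Pi.single (Fin.last K) 1) (Pi.single (Fin.last K) 1)
        - C0).mulVec u) :=
  stmt10_general K C hconv hcone hne hcompact C0
end

section
/- Let h_{ℓ−1} < h_ℓ < h_{ℓ+1} be real breakpoints. Then the linear system in variables (a,b,c,d,e) ∈ ℝ₊⁵: (h_{ℓ+1} − h_{ℓ−1})c = h_{ℓ+1} − h_ℓ, (h_ℓ − h_{ℓ−1})d + (h_{ℓ+1} − h_ℓ)c = (h_{ℓ+1} − h_{ℓ−1}) + (h_{ℓ+1} − h_ℓ)e, (h_ℓ − h_{ℓ−1}) + (h_{ℓ+1} − h_{ℓ−1})a + (h_{ℓ+1} − h_ℓ)b = (h_{ℓ+1} − h_{ℓ−1})d, together with positive semidefiniteness of the 3×3 matrix [[c, −d/2, (d−a−c)/2], [−d/2, −c+d+e, (−b+c−e)/2], [(d−a−c)/2, (−b+c−e)/2, a+b−d]],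 is satisfied by a = c = (h_{ℓ+1}−h_ℓ)/(h_{ℓ+1}−h_{ℓ−1}), b = (h_{ℓ+1}−h_{ℓ−1})/(h_{ℓ+1}−h_ℓ), d = 2, e = (h_ℓ−h_{ℓ−1})²/((h_{ℓ+1}−h_{ℓ−1})(h_{ℓ+1}−h_ℓ)). -/
/-!
At the certificate the slack matrix has rank one: it is `(β / γ) • v vᵀ` with
`β = h₂ - h₁`, `γ = h₂ - h₀` and `v = (1, -γ / β, (h₁ - h₀) / β)`, hence positive
semidefinite. The linear equations are identities of rational functions in the breakpoints.
-/

open Matrix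

/-- The dual slack matrix of the copositive relaxation at a breakpoint, in the variables
`(a, b, c, d, e)` of the dual linear system. -/
noncomputable def dualSlackMatrix (a b c d e : ℝ) : Matrix (Fin 3) (Fin 3) ℝ :=
  !![c, -d / 2, (d - a - c) / 2;
     -d / 2, -c + d + e, (-b + c - e) / 2;
     (d - a - c) / 2, (-b + c - e) / 2, a + b - d]

theorem dualSlackMatrix_certificate_eq_smul_vecMulVec {h0 h1 h2 : ℝ}
    (h02 : h2 - h0 ≠ 0) (h12 : h2 - h1 ≠ 0) :
    dualSlackMatrix ((h2 - h1) / (h2 - h0)) ((h2 - h0) / (h2 - h1)) ((h2 - h1) / (h2 - h0)) 2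
        ((h1 - h0) ^ 2 / ((h2 - h0) * (h2 - h1))) =
      ((h2 - h1) / (h2 - h0)) •
        vecMulVec ![1, -(h2 - h0) / (h2 - h1), (h1 - h0) / (h2 - h1)]
          ![1, -(h2 - h0) / (h2 - h1), (h1 - h0) / (h2 - h1)] := by
  ext i j
  fin_cases i <;> fin_cases j <;>
    simp only [dualSlackMatrix, Matrix.smul_apply, vecMulVec_apply, of_apply, cons_val,
      Fin.reduceFinMk, smul_eq_mul] <;>
    field_simp <;> ring

/-- Explicit dual feasibility certificate in the proof of Theorem 4.2: the given values
of `(a,b,c,d,e)` are nonnegative, satisfy the three linear equations, and make the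
associated 3×3 matrix positive semidefinite. -/
theorem stmt17 (h0 h1 h2 : ℝ) (H1 : h0 < h1) (H2 : h1 < h2)
    (a b c d e : ℝ)
    (ha : a = (h2 - h1) / (h2 - h0))
    (hb : b = (h2 - h0) / (h2 - h1))
    (hc : c = (h2 - h1) / (h2 - h0))
    (hd : d = 2)
    (he : e = (h1 - h0) ^ 2 / ((h2 - h0) * (h2 - h1))) :
    (0 ≤ a ∧ 0 ≤ b ∧ 0 ≤ c ∧ 0 ≤ d ∧ 0 ≤ e) ∧
    (h2 - h0) * c = h2 - h1 ∧
    (h1 - h0) * d + (h2 - h1) * c = (h2 - h0) + (h2 - h1) * e ∧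
    (h1 - h0) + (h2 - h0) * a + (h2 - h1) * b = (h2 - h0) * d ∧
    (!![c, -d / 2, (d - a - c) / 2;
        -d / 2, -c + d + e, (-b + c - e) / 2;
        (d - a - c) / 2, (-b + c - e) / 2, a + b - d] : Matrix (Fin 3) (Fin 3) ℝ).PosSemidef := by
  have h12 : 0 < h2 - h1 := sub_pos.2 H2
  have h02 : 0 < h2 - h0 := sub_pos.2 (H1.trans H2)
  subst ha hb hc hd he
  refine ⟨⟨by positivity, by positivity, by positivity, zero_le_two, by positivity⟩,
    ?_, ?_, ?_, ?_⟩
  · field_simp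
  · field_simp; ring
  · field_simp; ring
  · change (dualSlackMatrix _ _ _ _ _).PosSemidef
    rw [dualSlackMatrix_certificate_eq_smul_vecMulVec h02.ne' h12.ne']
    exact (posSemidef_vecMulVec_self_star _).smul (by positivity)
end
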